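/- arXiv:2010.06129 — 3 statements merged into one kernel-verified Lean document; each statement's English description precedes it below -/
import Mathlib

section
/- Let C be a positive number with C ≥ √r·|α|. For any h∈ℋ(f,e) such that the operator norm |f|_h ≤ C, one has |α|^r·(C+1)^{−2r} ≤ |e_i|_h ≤ |α|^{−r}·(C+1)^{2r} for every i=0,…,r−1. -/
/-! Write `d i = h (e i) (e i)`. The bound `|f|_h ≤ C` gives `d (i + 1) ≤ C² d i` along the
cycle and `|α|^{2r} d 0 ≤ C² d (r - 1)` at the wrap-around, so walking around the cycle yields
`|α|^{2r} d i ≤ (C + 1)^{4r} d j` for all `i, j`. As `∏ d j = 1`, some `d j ≤ 1` and some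
`d j ≥ 1`; taking square roots gives both bounds. -/

structure HermMetric (r : ℕ) {V : Type*} [AddCommGroup V] [Module ℂ V]
    (e : Module.Basis (Fin r) ℂ V) (h : V → V → ℂ) : Prop where
  add_left : ∀ x y z : V, h (x + y) z = h x z + h y z
  smul_left : ∀ (c : ℂ) (x y : V), h (c • x) y = (starRingEnd ℂ) c * h x y
  conj_symm : ∀ x y : V, h y x = (starRingEnd ℂ) (h x y)
  pos_def : ∀ x : V, x ≠ 0 → 0 < (h x x).re
  orthogonal : ∀ i j : Fin r, i ≠ j → h (e i) (e j) = 0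
  prod_one : ∏ i : Fin r, h (e i) (e i) = 1

namespace HermMetric

variable {r : ℕ} {V : Type*} [AddCommGroup V] [Module ℂ V] {e : Module.Basis (Fin r) ℂ V}
  {h : V → V → ℂ}

lemma smul_right (hM : HermMetric r e h) (c : ℂ) (x y : V) : h x (c • y) = c * h x y := by
  rw [hM.conj_symm, hM.smul_left, map_mul, Complex.conj_conj, ← hM.conj_symm]

lemma ofReal_re_self (hM : HermMetric r e h) (x : V) : ((h x x).re : ℂ) = h x x :=
  Complex.conj_eq_iff_re.mp (hM.conj_symm x x).symm

lemma re_smul_self (hM : HermMetric r e h) (c : ℂ) (x : V) :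
    (h (c • x) (c • x)).re = ‖c‖ ^ 2 * (h x x).re := by
  rw [hM.smul_left, hM.smul_right, ← mul_assoc, ← hM.ofReal_re_self, Complex.conj_mul',
    ← Complex.ofReal_pow, ← Complex.ofReal_mul, Complex.ofReal_re, Complex.ofReal_re]

lemma prod_re_basis (hM : HermMetric r e h) : ∏ i, (h (e i) (e i)).re = 1 := by
  exact_mod_cast (Complex.ofReal_prod _ _).trans
    ((Finset.prod_congr rfl fun i _ => hM.ofReal_re_self (e i)).trans hM.prod_one)

lemma re_basis_pos (hM : HermMetric r e h) (i : Fin r) : 0 < (h (e i) (e i)).re :=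
  hM.pos_def _ (e.ne_zero i)

end HermMetric

section CyclicChain

variable {r : ℕ} {d : Fin r → ℝ} {a c : ℝ}

lemma le_pow_mul_of_succ_le_mul (hc : 0 ≤ c)
    (hstep : ∀ (i : Fin r) (h : (i : ℕ) + 1 < r), d ⟨i + 1, h⟩ ≤ c * d i) :
    ∀ (k : ℕ) (j : Fin r) (h : (j : ℕ) + k < r), d ⟨j + k, h⟩ ≤ c ^ k * d j
  | 0, j, _ => by simp
  | k + 1, j, h => calc
      d ⟨j + (k + 1), h⟩ ≤ c * d ⟨j + k, by omega⟩ := hstep ⟨j + k, by omega⟩ h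
      _ ≤ c * (c ^ k * d j) := by gcongr; exact le_pow_mul_of_succ_le_mul hc hstep k j _
      _ = c ^ (k + 1) * d j := by ring

lemma le_pow_sub_mul_of_succ_le_mul (hc : 0 ≤ c)
    (hstep : ∀ (i : Fin r) (h : (i : ℕ) + 1 < r), d ⟨i + 1, h⟩ ≤ c * d i) {i j : Fin r}
    (hji : j ≤ i) : d i ≤ c ^ ((i : ℕ) - j) * d j := by
  have := le_pow_mul_of_succ_le_mul hc hstep ((i : ℕ) - j) j (by omega)
  rwa [show (⟨j + ((i : ℕ) - j), by omega⟩ : Fin r) = i by ext; simp only; omega] at this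

/-- Walk from `j` to `i` along the cycle: directly if `j ≤ i`, with `a ≤ c ^ r` making up for
the missing wrap-around, and through the wrap-around step otherwise. -/
lemma mul_le_pow_mul_of_cyclic (hr : 0 < r) (hd : ∀ i, 0 ≤ d i) (hc : 1 ≤ c) (ha : 0 ≤ a)
    (hac : a ≤ c ^ r)
    (hstep : ∀ (i : Fin r) (h : (i : ℕ) + 1 < r), d ⟨i + 1, h⟩ ≤ c * d i)
    (hwrap : a * d ⟨0, hr⟩ ≤ c * d ⟨r - 1, by omega⟩) (i j : Fin r) :
    a * d i ≤ c ^ (2 * r) * d j := by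
  have hc0 : 0 ≤ c := by linarith
  have hchain := fun {i j : Fin r} (hji : j ≤ i) => le_pow_sub_mul_of_succ_le_mul hc0 hstep hji
  have hpow : ∀ {k : ℕ}, k ≤ 2 * r → c ^ k ≤ c ^ (2 * r) := pow_le_pow_right₀ hc
  rcases le_or_gt j i with hji | hij
  · calc a * d i ≤ c ^ r * (c ^ ((i : ℕ) - j) * d j) :=
          mul_le_mul hac (hchain hji) (hd i) (by positivity)
      _ = c ^ (r + ((i : ℕ) - j)) * d j := by ring
      _ ≤ c ^ (2 * r) * d j := mul_le_mul_of_nonneg_right (hpow (by omega)) (hd j)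
  · calc a * d i ≤ a * (c ^ (i : ℕ) * d ⟨0, hr⟩) := by
          gcongr; simpa using hchain (i := i) (j := ⟨0, hr⟩) (Nat.zero_le _)
      _ = c ^ (i : ℕ) * (a * d ⟨0, hr⟩) := by ring
      _ ≤ c ^ (i : ℕ) * (c * (c ^ (r - 1 - j) * d j)) := by
          refine mul_le_mul_of_nonneg_left (hwrap.trans ?_) (by positivity)
          gcongr
          simpa using hchain (i := ⟨r - 1, by omega⟩) (j := j) (by rw [Fin.le_def]; simp only; omega)
      _ = c ^ ((i : ℕ) + 1 + (r - 1 - j)) * d j := by ring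
      _ ≤ c ^ (2 * r) * d j := mul_le_mul_of_nonneg_right (hpow (by omega)) (hd j)

end CyclicChain

section ProdEqOne

variable {ι : Type*} [Fintype ι] [Nonempty ι] {d : ι → ℝ}

lemma exists_le_one_of_prod_eq_one (hprod : ∏ i, d i = 1) : ∃ j, d j ≤ 1 := by
  by_contra! hgt
  have := Finset.prod_lt_prod_of_nonempty (fun _ _ => zero_lt_one) (fun i _ => hgt i)
    Finset.univ_nonempty
  simp [hprod] at this

lemma exists_one_le_of_prod_eq_one (hd : ∀ i, 0 < d i) (hprod : ∏ i, d i = 1) :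
    ∃ j, 1 ≤ d j := by
  by_contra! hlt
  have := Finset.prod_lt_prod_of_nonempty (fun i _ => hd i) (fun i _ => hlt i)
    Finset.univ_nonempty
  simp [hprod] at this

lemma mul_le_and_le_mul_of_prod_eq_one (hd : ∀ i, 0 < d i) (hprod : ∏ i, d i = 1) {a K : ℝ}
    (ha : 0 ≤ a) (hK : 0 ≤ K) (hdK : ∀ i j, a * d i ≤ K * d j) (i : ι) :
    a * d i ≤ K ∧ a ≤ K * d i := by
  obtain ⟨j, hj⟩ := exists_le_one_of_prod_eq_one hprod
  obtain ⟨k, hk⟩ := exists_one_le_of_prod_eq_one hd hprod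
  exact ⟨(hdK i j).trans (mul_le_of_le_one_right hK hj),
    (le_mul_of_one_le_right ha hk).trans (hdK k i)⟩

end ProdEqOne

lemma sqrt_bounds_of_sq_bounds {x p q : ℝ} (hp : 0 < p) (hq : 0 < q)
    (hup : p ^ 2 * x ≤ q ^ 2) (hlo : p ^ 2 ≤ q ^ 2 * x) : p * q⁻¹ ≤ √x ∧ √x ≤ p⁻¹ * q := by
  constructor
  · rw [Real.le_sqrt (by positivity) (by nlinarith [sq_nonneg p]), mul_pow, inv_pow,
      ← div_eq_mul_inv, div_le_iff₀ (by positivity)]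
    linarith
  · rw [Real.sqrt_le_left (by positivity), mul_pow, inv_pow, ← div_eq_inv_mul,
      le_div_iff₀ (by positivity)]
    linarith

theorem basis_norm_two_sided_bounds_general
    (r : ℕ) (hr : 0 < r) (V : Type*) [AddCommGroup V] [Module ℂ V]
    (e : Module.Basis (Fin r) ℂ V) (α : ℂ) (hα : α ≠ 0)
    (f : V →ₗ[ℂ] V)
    (hf : ∀ (i : Fin r) (h : (i : ℕ) + 1 < r), f (e i) = e ⟨(i : ℕ) + 1, h⟩)
    (hlast : f (e ⟨r - 1, Nat.sub_lt hr Nat.one_pos⟩) = α ^ r • e ⟨0, hr⟩)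
    (C : ℝ) (hC : Real.sqrt r * ‖α‖ ≤ C)
    (h : V → V → ℂ) (hMet : HermMetric r e h)
    (hfC : ∀ x : V, (h (f x) (f x)).re ≤ C ^ 2 * (h x x).re) :
    ∀ i : Fin r,
      ‖α‖ ^ (r : ℝ) * (C + 1) ^ (-(2 * (r : ℝ))) ≤ Real.sqrt (h (e i) (e i)).re ∧
      Real.sqrt (h (e i) (e i)).re ≤ ‖α‖ ^ (-(r : ℝ)) * (C + 1) ^ (2 * (r : ℝ)) := by
  have : Nonempty (Fin r) := ⟨⟨0, hr⟩⟩
  have hαC : ‖α‖ ≤ C := (le_mul_of_one_le_left (norm_nonneg α)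
    (Real.one_le_sqrt.mpr (by exact_mod_cast hr))).trans hC
  have hα0 : 0 < ‖α‖ := norm_pos_iff.mpr hα
  have hC1 : 0 < C + 1 := by linarith
  have hC2 : C ^ 2 ≤ (C + 1) ^ 2 := pow_le_pow_left₀ (by linarith) (by linarith) 2
  have hstep (i : Fin r) (hi : (i : ℕ) + 1 < r) :
      (h (e ⟨i + 1, hi⟩) (e ⟨i + 1, hi⟩)).re ≤ (C + 1) ^ 2 * (h (e i) (e i)).re :=
    (hf i hi ▸ hfC (e i)).trans (mul_le_mul_of_nonneg_right hC2 (hMet.re_basis_pos i).le)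
  have hwrap : (‖α‖ ^ r) ^ 2 * (h (e ⟨0, hr⟩) (e ⟨0, hr⟩)).re ≤
      (C + 1) ^ 2 * (h (e ⟨r - 1, by omega⟩) (e ⟨r - 1, by omega⟩)).re := by
    have := hfC (e ⟨r - 1, by omega⟩)
    rw [hlast, hMet.re_smul_self, norm_pow] at this
    exact this.trans (mul_le_mul_of_nonneg_right hC2 (hMet.re_basis_pos _).le)
  have hαr : (‖α‖ ^ r) ^ 2 ≤ ((C + 1) ^ 2) ^ r := by
    rw [pow_right_comm]
    exact pow_le_pow_left₀ (by positivity) ((pow_le_pow_left₀ hα0.le hαC 2).trans hC2) r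
  have hcyc := mul_le_pow_mul_of_cyclic (d := fun i => (h (e i) (e i)).re) hr
    (fun i => (hMet.re_basis_pos i).le) (one_le_pow₀ (by linarith)) (by positivity)
    hαr hstep hwrap
  intro i
  obtain ⟨hup, hlo⟩ := mul_le_and_le_mul_of_prod_eq_one hMet.re_basis_pos hMet.prod_re_basis
    (by positivity) (by positivity) hcyc i
  rw [pow_right_comm (C + 1) 2 (2 * r)] at hup hlo
  have hcast : (2 * (r : ℝ)) = ((2 * r : ℕ) : ℝ) := by push_cast; ring
  rw [Real.rpow_neg (by positivity), Real.rpow_neg (by positivity), hcast, Real.rpow_natCast,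
    Real.rpow_natCast]
  exact sqrt_bounds_of_sq_bounds (by positivity) (by positivity) hup hlo

/-- two-sided bounds for the norms of the basis vectors when the operator
norm of `f` is bounded by `C`. -/
theorem basis_norm_two_sided_bounds
    (r : ℕ) (hr : 0 < r) (V : Type*) [AddCommGroup V] [Module ℂ V]
    (e : Module.Basis (Fin r) ℂ V) (α : ℂ) (hα : α ≠ 0)
    (f : V →ₗ[ℂ] V)
    (hf : ∀ (i : Fin r) (h : (i : ℕ) + 1 < r), f (e i) = e ⟨(i : ℕ) + 1, h⟩)
    (hlast : f (e ⟨r - 1, Nat.sub_lt hr Nat.one_pos⟩) = α ^ r • e ⟨0, hr⟩)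
    (C : ℝ) (hCpos : 0 < C) (hC : Real.sqrt r * ‖α‖ ≤ C)
    (h : V → V → ℂ) (hMet : HermMetric r e h)
    (hfC : ∀ x : V, (h (f x) (f x)).re ≤ C ^ 2 * (h x x).re) :
    ∀ i : Fin r,
      ‖α‖ ^ (r : ℝ) * (C + 1) ^ (-(2 * (r : ℝ))) ≤ Real.sqrt (h (e i) (e i)).re ∧
      Real.sqrt (h (e i) (e i)).re ≤ ‖α‖ ^ (-(r : ℝ)) * (C + 1) ^ (2 * (r : ℝ)) :=
  basis_norm_two_sided_bounds_general r hr V e α hα f hf hlast C hC h hMet hfC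
end

section
/- Let a>1/2 and R>0. Let f be a real-valued C^∞ function, subharmonic on an open neighbourhood of D̄_a(R). Assume: (i) f is bounded from above on the topological boundary ∂D̄_a(R); (ii) there exist C>0, 0<ρ<a, and an exhaustive family {K_i} of D_a(R) such that f ≤ C(|z|^ρ+1) on ∂K_i for every i. Then f is bounded from above on D̄_a(R). -/
/-!
Phragmén–Lindelöf with the weight `Re (z ^ b)`, `ρ < b < a`. Since `a > 1/2` the closed sector
lies in the slit plane, so `Re (z ^ b)` is harmonic there, and it is at least
`cos (b π / (2a)) |z| ^ b` with a positive constant. For `ε > 0`, `f - ε Re (z ^ b)` is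
subharmonic; the maximum principle on the `K i` together with `ρ < b` bounds it above on the
sector, so on the arcs `|z| = r`, `r` large, it is below the boundary bound `M` of `f`. The maximum
principle on the truncated sectors then gives `f ≤ M + ε Re (z ^ b)`, and `ε → 0`.
-/

/-- The sector `D_a(R) = {z : |z| > R, |arg z| < π/(2a)}`. -/
def Da (a R : ℝ) : Set ℂ :=
  {z : ℂ | R < ‖z‖ ∧ |Complex.arg z| < Real.pi / (2 * a)}

/-- A continuous function is subharmonic on an open set if it satisfies the
sub-mean-value inequality on every closed disc contained in the set. -/
def IsSubharmonicOn (u : ℂ → ℝ) (Ω : Set ℂ) : Prop :=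
  ContinuousOn u Ω ∧
  ∀ (z : ℂ) (ρ : ℝ), 0 < ρ → Metric.closedBall z ρ ⊆ Ω →
    u z ≤ (2 * Real.pi)⁻¹ *
      ∫ θ in (0 : ℝ)..(2 * Real.pi), u (z + ρ * Complex.exp (θ * Complex.I))

/-- An exhaustive family of an open set: an increasing sequence of relatively compact
open subsets whose union is the whole set. -/
structure ExhaustiveFamily (K : ℕ → Set ℂ) (U : Set ℂ) : Prop where
  isOpen : ∀ i, IsOpen (K i)
  compact_closure : ∀ i, IsCompact (closure (K i))
  closure_subset : ∀ i, closure (K i) ⊆ U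
  mono : ∀ i, K i ⊆ K (i + 1)
  union_eq : (⋃ i, K i) = U

open Complex Metric Set Filter Topology Real

section Subharmonic

variable {u : ℂ → ℝ} {Ω U : Set ℂ}

theorem IsSubharmonicOn.mono (hu : IsSubharmonicOn u Ω) (h : U ⊆ Ω) : IsSubharmonicOn u U :=
  ⟨hu.1.mono h, fun z r hr hball => hu.2 z r hr (hball.trans h)⟩

theorem IsSubharmonicOn.le_circleAverage (hu : IsSubharmonicOn u Ω) {z : ℂ} {r : ℝ} (hr : 0 < r)
    (h : closedBall z r ⊆ Ω) : u z ≤ circleAverage u z r :=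
  hu.2 z r hr h

theorem DifferentiableOn.circleAverage_re {φ : ℂ → ℂ} (hφ : DifferentiableOn ℂ φ Ω) {z : ℂ}
    {r : ℝ} (hr : 0 < r) (h : closedBall z r ⊆ Ω) :
    circleAverage (fun w => (φ w).re) z r = (φ z).re := by
  have hdiff : DiffContOnCl ℂ φ (ball z |r|) := by
    rw [abs_of_pos hr]
    exact (hφ.mono (by rwa [closure_ball z hr.ne'])).diffContOnCl
  rw [← hdiff.circleAverage]
  exact reCLM.circleAverage_comp_comm
    ((hφ.continuousOn.mono (sphere_subset_closedBall.trans (by rwa [abs_of_pos hr]))).circleIntegrable')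

theorem IsSubharmonicOn.sub_mul_re (hu : IsSubharmonicOn u Ω) {φ : ℂ → ℂ}
    (hφ : DifferentiableOn ℂ φ Ω) (ε : ℝ) : IsSubharmonicOn (fun w => u w - ε * (φ w).re) Ω := by
  have hre : ContinuousOn (fun w => ε * (φ w).re) Ω :=
    continuousOn_const.mul (continuous_re.comp_continuousOn hφ.continuousOn)
  refine ⟨hu.1.sub hre, fun z r hr h => ?_⟩
  have hsphere : sphere z |r| ⊆ Ω := sphere_subset_closedBall.trans (by rwa [abs_of_pos hr])
  show u z - ε * (φ z).re ≤ circleAverage (fun w => u w - ε * (φ w).re) z r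
  have hmean : circleAverage (fun w => ε * (φ w).re) z r = ε * (φ z).re := by
    rw [← hφ.circleAverage_re hr h]
    exact circleAverage_fun_smul (𝕜 := ℝ) (E := ℝ)
  rw [circleAverage_fun_sub (hu.1.mono hsphere).circleIntegrable'
    (hre.mono hsphere).circleIntegrable', hmean]
  linarith [hu.le_circleAverage hr h]

theorem circleAverage_lt_of_le_of_exists_lt {f : ℂ → ℝ} {c : ℂ} {r m : ℝ}
    (hf : ContinuousOn f (sphere c |r|)) (hle : ∀ x ∈ sphere c |r|, f x ≤ m)
    (hlt : ∃ x ∈ sphere c |r|, f x < m) : circleAverage f c r < m := by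
  obtain ⟨x, hx, hfx⟩ := hlt
  obtain ⟨θ, hθ, rfl⟩ := (image_circleMap_Ioc c r).symm ▸ hx
  have hF : ContinuousOn (fun t => f (circleMap c r t)) (Icc 0 (2 * π)) :=
    hf.comp_continuous (continuous_circleMap c r) (circleMap_mem_sphere' c r) |>.continuousOn
  have hint := intervalIntegral.integral_lt_integral_of_continuousOn_of_le_of_exists_lt
    two_pi_pos hF continuousOn_const (fun t _ => hle _ (circleMap_mem_sphere' c r t))
    ⟨θ, Ioc_subset_Icc_self hθ, hfx⟩
  rw [intervalIntegral.integral_const, sub_zero, smul_eq_mul] at hint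
  rw [circleAverage, smul_eq_mul, inv_mul_lt_iff₀ two_pi_pos]
  exact hint

end Subharmonic

section MaximumPrinciple

variable {g : ℂ → ℝ} {U : Set ℂ}

theorem IsSubharmonicOn.exists_re_gt_of_isMaxOn (hg : IsSubharmonicOn g U) {w : ℂ}
    (hw : w ∈ interior U) (hmax : ∀ x ∈ U, g x ≤ g w) : ∃ x ∈ U, w.re < x.re ∧ g x = g w := by
  obtain ⟨ε, hε, hball⟩ := Metric.isOpen_iff.1 isOpen_interior w hw
  have hr : 0 < ε / 2 := half_pos hε
  have hcb : closedBall w (ε / 2) ⊆ U :=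
    (closedBall_subset_ball (half_lt_self hε)).trans (hball.trans interior_subset)
  have hsph : sphere w |ε / 2| ⊆ U := by
    rw [abs_of_pos hr]; exact sphere_subset_closedBall.trans hcb
  have hx : circleMap w (ε / 2) 0 ∈ sphere w |ε / 2| := circleMap_mem_sphere' w _ 0
  refine ⟨circleMap w (ε / 2) 0, hsph hx, by simp [circleMap, hr], ?_⟩
  by_contra hne
  have hlt : circleAverage g w (ε / 2) < g w :=
    circleAverage_lt_of_le_of_exists_lt (hg.1.mono hsph) (fun x hx => hmax x (hsph hx))
      ⟨_, hx, (hmax _ (hsph hx)).lt_of_ne hne⟩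
  exact hlt.not_ge (hg.le_circleAverage hr hcb)

theorem IsSubharmonicOn.le_of_forall_frontier_le (hb : Bornology.IsBounded U)
    (hg : IsSubharmonicOn g U) (hgc : ContinuousOn g (closure U)) {M : ℝ}
    (hM : ∀ w ∈ frontier U, g w ≤ M) : ∀ z ∈ U, g z ≤ M := by
  intro z hz
  by_contra! hMz
  have hcpt : IsCompact (closure U) := hb.isCompact_closure
  obtain ⟨z₀, hz₀, hmax⟩ := hcpt.exists_isMaxOn ⟨z, subset_closure hz⟩ hgc
  set T := closure U ∩ g ⁻¹' {g z₀}
  have hT : IsCompact T := hcpt.of_isClosed_subset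
    (hgc.preimage_isClosed_of_isClosed isClosed_closure isClosed_singleton) inter_subset_left
  -- A maximum point of largest real part is interior, yet the sub-mean-value property makes
  -- the maximum recur further right; this sidesteps any connectedness argument.
  obtain ⟨w, hwT, hwmax⟩ := hT.exists_isMaxOn ⟨z₀, hz₀, rfl⟩ continuous_re.continuousOn
  have hgw : g w = g z₀ := hwT.2
  have hwint : w ∈ interior U := by
    by_contra hw
    have hgz : g z ≤ g z₀ := hmax (subset_closure hz)
    linarith [hM w ⟨hwT.1, hw⟩]
  obtain ⟨x, hxU, hxre, hgx⟩ :=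
    hg.exists_re_gt_of_isMaxOn hwint fun x hx => hgw ▸ hmax (subset_closure hx)
  exact hxre.not_ge (hwmax ⟨subset_closure hxU, hgx.trans hgw⟩)

theorem ExhaustiveFamily.isOpen_domain {K : ℕ → Set ℂ} (hK : ExhaustiveFamily K U) :
    IsOpen U :=
  hK.union_eq ▸ isOpen_iUnion hK.isOpen

theorem IsSubharmonicOn.le_of_forall_frontier_exhaustion_le {K : ℕ → Set ℂ}
    (hK : ExhaustiveFamily K U) (hg : IsSubharmonicOn g U) {M : ℝ}
    (hM : ∀ i, ∀ w ∈ frontier (K i), g w ≤ M) : ∀ z ∈ U, g z ≤ M := by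
  intro z hz
  obtain ⟨i, hzi⟩ := mem_iUnion.1 (hK.union_eq ▸ hz)
  exact (hg.mono (subset_closure.trans (hK.closure_subset i))).le_of_forall_frontier_le
    ((hK.compact_closure i).isBounded.subset subset_closure)
    (hg.1.mono (hK.closure_subset i)) (hM i) z hzi

theorem IsSubharmonicOn.le_of_forall_frontier_le_of_sphere_le (hU : IsOpen U)
    (hg : IsSubharmonicOn g U) (hgc : ContinuousOn g (closure U)) {M : ℝ}
    (hM : ∀ w ∈ frontier U, g w ≤ M) (hsph : ∀ᶠ r in atTop, ∀ w ∈ U, ‖w‖ = r → g w ≤ M) :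
    ∀ z ∈ U, g z ≤ M := by
  intro z hz
  obtain ⟨r, hr, hzr⟩ := (hsph.and (eventually_gt_atTop ‖z‖)).exists
  refine (hg.mono inter_subset_left).le_of_forall_frontier_le (U := U ∩ ball 0 r)
    (isBounded_ball.subset inter_subset_right) (hgc.mono (closure_mono inter_subset_left))
    (fun w hw => ?_) z ⟨hz, by simpa using hzr⟩
  rcases frontier_inter_subset U (ball 0 r) hw with ⟨hwU, -⟩ | ⟨hwcl, hws⟩
  · exact hM w hwU
  by_cases hwU : w ∈ U
  · exact hr w hwU (by simpa using frontier_ball_subset_sphere hws)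
  · exact hM w (by rw [hU.frontier_eq]; exact ⟨hwcl, hwU⟩)

end MaximumPrinciple

theorem PhragmenLindelof.subharmonic_of_exhaustion {U : Set ℂ} {K : ℕ → Set ℂ}
    (hK : ExhaustiveFamily K U) {u : ℂ → ℝ} (hu : IsSubharmonicOn u U)
    (huc : ContinuousOn u (closure U)) {φ : ℂ → ℂ} (hφ : DifferentiableOn ℂ φ U)
    (hφc : ContinuousOn φ (closure U)) (hφ_frontier : ∀ w ∈ frontier U, 0 ≤ (φ w).re)
    (hφ_atTop : ∀ N : ℝ, ∀ᶠ r in atTop, ∀ w ∈ U, ‖w‖ = r → N ≤ (φ w).re)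
    (hgrowth : ∀ η > 0, ∃ N : ℝ, ∀ i, ∀ w ∈ frontier (K i), u w - η * (φ w).re ≤ N)
    {M : ℝ} (hM : ∀ w ∈ frontier U, u w ≤ M) : ∀ z ∈ U, u z ≤ M := by
  have hbdd (η : ℝ) (hη : 0 < η) : ∃ N : ℝ, ∀ z ∈ U, u z - η * (φ z).re ≤ N := by
    obtain ⟨N, hN⟩ := hgrowth η hη
    exact ⟨N, (hu.sub_mul_re hφ η).le_of_forall_frontier_exhaustion_le hK hN⟩
  have hweighted (ε : ℝ) (hε : 0 < ε) : ∀ z ∈ U, u z - ε * (φ z).re ≤ M := by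
    obtain ⟨N, hN⟩ := hbdd (ε / 2) (half_pos hε)
    refine (hu.sub_mul_re hφ ε).le_of_forall_frontier_le_of_sphere_le hK.isOpen_domain
      (huc.sub (continuousOn_const.mul (continuous_re.comp_continuousOn hφc)))
      (fun w hw => ?_) ?_
    · linarith [hM w hw, mul_nonneg hε.le (hφ_frontier w hw)]
    · filter_upwards [hφ_atTop (2 * (N - M) / ε)] with r hr w hw hwr
      -- `u - ε Re φ = (u - (ε / 2) Re φ) - (ε / 2) Re φ ≤ N - (N - M)`
      have hlarge : 2 * (N - M) ≤ ε * (φ w).re := (div_le_iff₀' hε).1 (hr w hw hwr)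
      linarith [hN w hw]
  intro z hz
  have hlim : Tendsto (fun ε => M + ε * (φ z).re) (𝓝[>] 0) (𝓝 M) := by
    simpa using ((tendsto_id.mul_const (φ z).re).const_add M).mono_left
      (nhdsWithin_le_nhds (a := (0 : ℝ)))
  exact ge_of_tendsto hlim (eventually_nhdsWithin_of_forall fun ε hε => by
    linarith [hweighted ε hε z hz])

section Sector

theorem abs_arg_eq_arccos {z : ℂ} (hz : z ≠ 0) : |arg z| = arccos (z.re / ‖z‖) := by
  rw [← cos_arg hz, ← Real.cos_abs]
  exact (arccos_cos (abs_nonneg _) (abs_arg_le_pi z)).symm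

theorem continuousOn_abs_arg : ContinuousOn (fun z : ℂ => |arg z|) {0}ᶜ :=
  (continuous_arccos.comp_continuousOn (continuous_re.continuousOn.div
    continuous_norm.continuousOn fun _ hz => norm_ne_zero_iff.2 hz)).congr
    fun _ hz => abs_arg_eq_arccos hz

theorem mem_slitPlane_of_abs_arg_lt {z : ℂ} (hz : z ≠ 0) (h : |arg z| < π) : z ∈ slitPlane :=
  mem_slitPlane_iff_arg.2 ⟨fun hπ => by simp [hπ, abs_of_pos pi_pos] at h, hz⟩

variable {a R : ℝ}

theorem closure_Da_subset (hR : 0 < R) :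
    closure (Da a R) ⊆ {z | R ≤ ‖z‖ ∧ |arg z| ≤ π / (2 * a)} := by
  have hne : {z : ℂ | R ≤ ‖z‖} ⊆ {0}ᶜ := fun z hz h0 => by
    simp only [mem_singleton_iff.1 h0, mem_ofPred_eq, norm_zero] at hz; linarith
  exact closure_minimal (fun z hz => ⟨hz.1.le, hz.2.le⟩)
    ((continuousOn_abs_arg.mono hne).preimage_isClosed_of_isClosed
      (isClosed_le continuous_const continuous_norm) isClosed_Iic)

theorem closure_Da_subset_slitPlane (ha : 1 / 2 < a) (hR : 0 < R) :
    closure (Da a R) ⊆ slitPlane := fun z hz =>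
  have hz' := closure_Da_subset hR hz
  mem_slitPlane_of_abs_arg_lt (norm_pos_iff.1 (hR.trans_le hz'.1))
    (hz'.2.trans_lt (div_lt_self pi_pos (by linarith)))

theorem cos_mul_rpow_le_re_cpow {w : ℂ} {b θ : ℝ} (hb : 0 ≤ b) (hw : |arg w| ≤ θ)
    (hbθ : b * θ ≤ π) : Real.cos (b * θ) * ‖w‖ ^ b ≤ (w ^ (b : ℂ)).re := by
  rw [cpow_ofReal_re, mul_comm, ← Real.cos_abs (arg w * b)]
  refine mul_le_mul_of_nonneg_left (cos_le_cos_of_nonneg_of_le_pi (abs_nonneg _) hbθ ?_)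
    (rpow_nonneg (norm_nonneg w) b)
  rw [abs_mul, abs_of_nonneg hb, mul_comm]
  exact mul_le_mul_of_nonneg_left hw hb

theorem mul_pi_div_two_mul_lt {b : ℝ} (ha : 0 < a) (hba : b < a) :
    b * (π / (2 * a)) < π / 2 :=
  calc b * (π / (2 * a)) < a * (π / (2 * a)) := by gcongr
    _ = π / 2 := by field_simp

theorem cos_mul_pi_div_two_mul_pos {b : ℝ} (ha : 0 < a) (hb : 0 ≤ b) (hba : b < a) :
    0 < Real.cos (b * (π / (2 * a))) :=
  cos_pos_of_mem_Ioo ⟨by nlinarith [pi_pos, mul_nonneg hb (by positivity : 0 ≤ π / (2 * a))],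
    mul_pi_div_two_mul_lt ha hba⟩

theorem cos_mul_rpow_le_re_cpow_of_mem_closure_Da (ha : 0 < a) (hR : 0 < R) {b : ℝ}
    (hb : 0 ≤ b) (hba : b < a) {w : ℂ} (hw : w ∈ closure (Da a R)) :
    Real.cos (b * (π / (2 * a))) * ‖w‖ ^ b ≤ (w ^ (b : ℂ)).re :=
  cos_mul_rpow_le_re_cpow hb (closure_Da_subset hR hw).2
    (by linarith [mul_pi_div_two_mul_lt ha hba, pi_pos])

end Sector

theorem exists_forall_mul_rpow_add_sub_le {C ρ b η : ℝ} (hC : 0 ≤ C) (hρ : 0 ≤ ρ) (hρb : ρ < b)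
    (hη : 0 < η) : ∃ N : ℝ, ∀ r ≥ 0, C * (r ^ ρ + 1) - η * r ^ b ≤ N := by
  obtain ⟨r₁, hr₁⟩ := eventually_atTop.1
    (((tendsto_rpow_atTop (sub_pos.2 hρb)).eventually_ge_atTop (C / η)).and
      (eventually_gt_atTop 0))
  refine ⟨C * (r₁ ^ ρ + 1), fun r hr => ?_⟩
  rcases le_total r r₁ with h | h
  · have : r ^ ρ ≤ r₁ ^ ρ := rpow_le_rpow hr h hρ
    have : 0 ≤ η * r ^ b := mul_nonneg hη.le (rpow_nonneg hr b)
    nlinarith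
  · obtain ⟨hpow, hpos⟩ := hr₁ r h
    have : C * r ^ ρ ≤ η * r ^ b :=
      calc C * r ^ ρ ≤ η * r ^ (b - ρ) * r ^ ρ :=
            mul_le_mul_of_nonneg_right ((div_le_iff₀' hη).1 hpow) (rpow_nonneg hr ρ)
        _ = η * r ^ b := by rw [mul_assoc, ← rpow_add hpos, sub_add_cancel]
    have : 0 ≤ C * r₁ ^ ρ := mul_nonneg hC (rpow_nonneg (hr₁ r₁ le_rfl).2.le ρ)
    linarith

theorem subharmonic_bounded_above_on_sector_general
    (a R : ℝ) (ha : 1 / 2 < a) (hR : 0 < R)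
    (f : ℂ → ℝ) (W : Set ℂ) (hWc : closure (Da a R) ⊆ W)
    (hfs : IsSubharmonicOn f W)
    (hbd0 : ∃ M₀ : ℝ, ∀ z ∈ frontier (Da a R), f z ≤ M₀)
    (C ρ : ℝ) (hC : 0 < C) (hρ0 : 0 < ρ) (hρa : ρ < a)
    (K : ℕ → Set ℂ) (hK : ExhaustiveFamily K (Da a R))
    (hKbd : ∀ i, ∀ z ∈ frontier (K i), f z ≤ C * (‖z‖ ^ ρ + 1)) :
    ∃ M : ℝ, ∀ z ∈ closure (Da a R), f z ≤ M := by
  obtain ⟨M, hM⟩ := hbd0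
  obtain ⟨b, hρb, hba⟩ := exists_between hρa
  have ha0 : 0 < a := by linarith
  have hb : 0 < b := hρ0.trans hρb
  set c := Real.cos (b * (π / (2 * a)))
  have hc : 0 < c := cos_mul_pi_div_two_mul_pos ha0 hb.le hba
  have hre (w : ℂ) (hw : w ∈ closure (Da a R)) : c * ‖w‖ ^ b ≤ (w ^ (b : ℂ)).re :=
    cos_mul_rpow_le_re_cpow_of_mem_closure_Da ha0 hR hb.le hba hw
  have hφ : DifferentiableOn ℂ (fun w => w ^ (b : ℂ)) (closure (Da a R)) :=
    differentiableOn_id.cpow_const fun w hw => closure_Da_subset_slitPlane ha hR hw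
  refine ⟨M, fun z hz => ?_⟩
  rcases (closure_eq_self_union_frontier (Da a R) ▸ hz : z ∈ Da a R ∪ _) with hz | hz
  · refine PhragmenLindelof.subharmonic_of_exhaustion hK (hfs.mono (subset_closure.trans hWc))
      (hfs.1.mono hWc) (hφ.mono subset_closure) hφ.continuousOn
      (fun w hw => (by positivity : 0 ≤ c * ‖w‖ ^ b).trans (hre w (frontier_subset_closure hw)))
      (fun N => ?_) (fun η hη => ?_) hM z hz
    · filter_upwards [(tendsto_rpow_atTop hb).eventually_ge_atTop (N / c)] with r hr w hw hwr
      exact ((div_le_iff₀' hc).1 hr).trans (hwr ▸ hre w (subset_closure hw))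
    · obtain ⟨N, hN⟩ := exists_forall_mul_rpow_add_sub_le hC.le hρ0.le hρb (mul_pos hη hc)
      refine ⟨N, fun i w hw => ?_⟩
      have hwD := subset_closure (hK.closure_subset i (frontier_subset_closure hw))
      have := mul_le_mul_of_nonneg_left (hre w hwD) hη.le
      linarith [hKbd i w hw, hN ‖w‖ (norm_nonneg w)]
  · exact hM z hz

/-- a smooth subharmonic function on a neighbourhood of the closed
sector, bounded above on the boundary and of slow growth on an exhaustive family,
is bounded above on the closed sector. -/
theorem subharmonic_bounded_above_on_sector
    (a R : ℝ) (ha : 1 / 2 < a) (hR : 0 < R)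
    (f : ℂ → ℝ) (W : Set ℂ) (hW : IsOpen W) (hWc : closure (Da a R) ⊆ W)
    (hfsmooth : ContDiffOn ℝ (⊤ : ℕ∞) f W)
    (hfs : IsSubharmonicOn f W)
    (hbd0 : ∃ M₀ : ℝ, ∀ z ∈ frontier (Da a R), f z ≤ M₀)
    (C ρ : ℝ) (hC : 0 < C) (hρ0 : 0 < ρ) (hρa : ρ < a)
    (K : ℕ → Set ℂ) (hK : ExhaustiveFamily K (Da a R))
    (hKbd : ∀ i, ∀ z ∈ frontier (K i), f z ≤ C * (‖z‖ ^ ρ + 1)) :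
    ∃ M : ℝ, ∀ z ∈ closure (Da a R), f z ≤ M :=
  subharmonic_bounded_above_on_sector_general a R ha hR f W hWc hfs hbd0 C ρ hC hρ0 hρa K hK hKbd
end

section
/- Let a>1/2, R>0, and let b_+, b_−, κ be non-negative real numbers with b:=max{b_+,b_−} ≤ κ. Let f be a real-valued function, subharmonic on D_a(R), which extends continuously to D̄_a(R), and assume: (i) for every δ>0 there exists M_{−,δ}>0 such that f ≤ M_{−,δ}(|z|^{b_−}+1) on {z∈D_a(R): −π/(2a)<arg z<−δ}; (ii) for every δ>0 there exists M_{+,δ}>0 such that f ≤ M_{+,δ}(|z|^{b_+}+1) on {z∈D_a(R): δ<arg z<π/(2a)}; (iii) there exist an exhaustive family {K_i} of D_a(R) and C>0 such that f ≤ C(|z|^κ+1) on ∂K_i for every i. Then there exists C_1>0 such that f ≤ C_1(|z|^b+1) on D_a(R). -/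
open Complex Metric Set Real Filter Topology

def HasSubMeanValueOn (u : ℂ → ℝ) (Ω : Set ℂ) : Prop :=
  ∀ (z : ℂ) (ρ : ℝ), 0 < ρ → closedBall z ρ ⊆ Ω → u z ≤ circleAverage u z ρ

lemma IsSubharmonicOn.hasSubMeanValueOn {u : ℂ → ℝ} {Ω : Set ℂ} (hu : IsSubharmonicOn u Ω) :
    HasSubMeanValueOn u Ω :=
  hu.2

lemma HasSubMeanValueOn.mono {u : ℂ → ℝ} {Ω Ω' : Set ℂ} (hu : HasSubMeanValueOn u Ω)
    (h : Ω' ⊆ Ω) : HasSubMeanValueOn u Ω' :=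
  fun z ρ hρ hball => hu z ρ hρ (hball.trans h)

lemma HasSubMeanValueOn.sub_re {u : ℂ → ℝ} {g : ℂ → ℂ} {Ω : Set ℂ} (hsm : HasSubMeanValueOn u Ω)
    (hu : ContinuousOn u Ω) (hg : DifferentiableOn ℂ g Ω) :
    HasSubMeanValueOn (fun z => u z - (g z).re) Ω := by
  intro z ρ hρ hball
  have hsphere : sphere z |ρ| ⊆ Ω := by
    rw [abs_of_pos hρ]; exact sphere_subset_closedBall.trans hball
  have hg_int : CircleIntegrable g z ρ := (hg.continuousOn.mono hsphere).circleIntegrable'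
  have hmean : circleAverage (fun w => (g w).re) z ρ = (g z).re := by
    rw [← (hg.diffContOnCl_ball (abs_of_pos hρ ▸ hball)).circleAverage]
    exact reCLM.circleAverage_comp_comm hg_int
  have hre_int : CircleIntegrable (fun w => (g w).re) z ρ :=
    (continuous_re.comp_continuousOn (hg.continuousOn.mono hsphere)).circleIntegrable'
  rw [circleAverage_fun_sub (hu.mono hsphere).circleIntegrable' hre_int, hmean]
  linarith [hsm z ρ hρ hball]

lemma circleAverage_lt_of_le_of_lt {u : ℂ → ℝ} {c : ℂ} {ρ M θ₀ : ℝ}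
    (hu : ContinuousOn u (sphere c |ρ|)) (hle : ∀ z ∈ sphere c |ρ|, u z ≤ M)
    (hlt : u (circleMap c ρ θ₀) < M) : circleAverage u c ρ < M := by
  have hcont : Continuous fun θ => u (circleMap c ρ (θ + θ₀)) :=
    hu.comp_continuous ((continuous_circleMap c ρ).comp (continuous_add_const θ₀))
      fun θ => circleMap_mem_sphere' c ρ _
  have hint : ∫ θ in 0..2 * π, u (circleMap c ρ (θ + θ₀)) < ∫ _ in 0..2 * π, M :=
    intervalIntegral.integral_lt_integral_of_continuousOn_of_le_of_exists_lt two_pi_pos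
      hcont.continuousOn continuousOn_const
      (fun θ _ => hle _ (circleMap_mem_sphere' c ρ _)) ⟨0, by simp [two_pi_pos.le], by simpa⟩
  rw [circleAverage_eq_integral_add θ₀, smul_eq_mul]
  rw [intervalIntegral.integral_const, smul_eq_mul, sub_zero] at hint
  calc (2 * π)⁻¹ * ∫ θ in 0..2 * π, u (circleMap c ρ (θ + θ₀))
      < (2 * π)⁻¹ * (2 * π * M) := mul_lt_mul_of_pos_left hint (by positivity)
    _ = M := by field_simp

lemma IsCompact.exists_isMaxOn_lt_of_re_lt {K : Set ℂ} {u : ℂ → ℝ} (hK : IsCompact K)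
    (hne : K.Nonempty) (hu : ContinuousOn u K) :
    ∃ w ∈ K, IsMaxOn u K w ∧ ∀ z ∈ K, w.re < z.re → u z < u w := by
  obtain ⟨w₀, hw₀, hmax⟩ := hK.exists_isMaxOn hne hu
  have hlevel : IsCompact (K ∩ u ⁻¹' {u w₀}) :=
    hK.of_isClosed_subset (hu.preimage_isClosed_of_isClosed hK.isClosed isClosed_singleton)
      inter_subset_left
  obtain ⟨w, ⟨hwK, hwlevel⟩, hwre⟩ :=
    hlevel.exists_isMaxOn ⟨w₀, hw₀, rfl⟩ continuous_re.continuousOn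
  have hw : u w = u w₀ := hwlevel
  refine ⟨w, hwK, fun z hz => hw ▸ hmax hz, fun z hz hre => ?_⟩
  exact lt_of_le_of_ne (hw ▸ hmax hz) fun heq => hre.not_ge (hwre ⟨hz, heq.trans hw⟩)

theorem HasSubMeanValueOn.nonpos_of_nonpos_on_frontier {u : ℂ → ℝ} {Ω : Set ℂ}
    (hsm : HasSubMeanValueOn u Ω) (hΩ : IsOpen Ω) (hc : IsCompact (closure Ω))
    (hu : ContinuousOn u (closure Ω)) (hb : ∀ z ∈ frontier Ω, u z ≤ 0) : ∀ z ∈ Ω, u z ≤ 0 := by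
  by_contra! ⟨z₀, hz₀, hpos⟩
  obtain ⟨w, hw, hmax, hre⟩ :=
    hc.exists_isMaxOn_lt_of_re_lt ⟨z₀, subset_closure hz₀⟩ hu
  have hwpos : 0 < u w := hpos.trans_le (hmax (subset_closure hz₀))
  have hwΩ : w ∈ Ω := by
    by_contra hwΩ
    exact (hb w ⟨hw, by rwa [hΩ.interior_eq]⟩).not_gt hwpos
  obtain ⟨ρ, hρ, hball⟩ := nhds_basis_closedBall.mem_iff.1 (hΩ.mem_nhds hwΩ)
  have hsphere : sphere w |ρ| ⊆ closure Ω := by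
    rw [abs_of_pos hρ]; exact sphere_subset_closedBall.trans (hball.trans subset_closure)
  -- `w + ρ` has larger real part than `w`, so it is no maximizer and the circle average drops
  -- below the maximum `u w`
  have hright : u (circleMap w ρ 0) < u w := by
    refine hre _ (hsphere (circleMap_mem_sphere' w ρ 0)) ?_
    simp [circleMap, hρ]
  exact (hsm w ρ hρ hball).not_gt <| circleAverage_lt_of_le_of_lt (hu.mono hsphere)
    (fun z hz => hmax (hsphere hz)) hright

theorem HasSubMeanValueOn.le_re_of_le_re_on_frontier {u : ℂ → ℝ} {g : ℂ → ℂ} {Ω : Set ℂ}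
    (hsm : HasSubMeanValueOn u Ω) (hΩ : IsOpen Ω) (hc : IsCompact (closure Ω))
    (hu : ContinuousOn u (closure Ω)) (hg : DifferentiableOn ℂ g (closure Ω))
    (hb : ∀ z ∈ frontier Ω, u z ≤ (g z).re) : ∀ z ∈ Ω, u z ≤ (g z).re := by
  have hdiff := (hsm.sub_re (hu.mono subset_closure) (hg.mono subset_closure))
    |>.nonpos_of_nonpos_on_frontier hΩ hc
      (hu.sub (continuous_re.comp_continuousOn hg.continuousOn))
      (fun z hz => sub_nonpos.2 (hb z hz))
  exact fun z hz => sub_nonpos.1 (hdiff z hz)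

/-- For `0 ≤ δ ≤ π` this is the open sector `{w ≠ 0 | |arg w| < δ}` (`mem_narrowSector_iff`),
written so that it is visibly open. -/
def narrowSector (δ : ℝ) : Set ℂ := {w : ℂ | Real.cos δ * ‖w‖ < w.re}

lemma isOpen_narrowSector (δ : ℝ) : IsOpen (narrowSector δ) :=
  isOpen_lt (continuous_const.mul continuous_norm) continuous_re

lemma mem_narrowSector_iff {δ : ℝ} {w : ℂ} (hδ : 0 ≤ δ) (hδπ : δ ≤ π) (hw : w ≠ 0) :
    w ∈ narrowSector δ ↔ |arg w| < δ := by
  rw [narrowSector, mem_ofPred_eq, ← norm_mul_cos_arg w, ← Real.cos_abs (arg w), mul_comm,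
    mul_lt_mul_iff_right₀ (norm_pos_iff.2 hw)]
  exact strictAntiOn_cos.lt_iff_gt ⟨hδ, hδπ⟩ ⟨abs_nonneg _, abs_arg_le_pi w⟩

lemma abs_arg_le_of_mem_closure_narrowSector {δ : ℝ} {w : ℂ} (hδ : 0 ≤ δ) (hδπ : δ ≤ π)
    (hw : w ≠ 0) (hcl : w ∈ closure (narrowSector δ)) : |arg w| ≤ δ := by
  have hle : Real.cos δ * ‖w‖ ≤ w.re :=
    closure_lt_subset_le (continuous_const.mul continuous_norm) continuous_re hcl
  rw [← norm_mul_cos_arg w, ← Real.cos_abs (arg w), mul_comm,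
    mul_le_mul_iff_right₀ (norm_pos_iff.2 hw)] at hle
  exact strictAntiOn_cos.le_iff_ge ⟨hδ, hδπ⟩ ⟨abs_nonneg _, abs_arg_le_pi w⟩ |>.1 hle

lemma abs_arg_eq_of_mem_frontier_narrowSector {δ : ℝ} {w : ℂ} (hδ : 0 ≤ δ) (hδπ : δ ≤ π)
    (hw : w ≠ 0) (hfr : w ∈ frontier (narrowSector δ)) : |arg w| = δ := by
  rw [(isOpen_narrowSector δ).frontier_eq] at hfr
  exact (abs_arg_le_of_mem_closure_narrowSector hδ hδπ hw hfr.1).antisymm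
    (not_lt.1 fun h => hfr.2 ((mem_narrowSector_iff hδ hδπ hw).2 h))

lemma mem_slitPlane_of_mem_closure_narrowSector {δ : ℝ} {w : ℂ} (hδ : 0 ≤ δ) (hδπ : δ < π)
    (hw : w ≠ 0) (hcl : w ∈ closure (narrowSector δ)) : w ∈ slitPlane := by
  have harg := abs_arg_le_of_mem_closure_narrowSector hδ hδπ.le hw hcl
  refine mem_slitPlane_iff_arg.2 ⟨fun hπ => ?_, hw⟩
  rw [hπ, abs_of_pos pi_pos] at harg
  linarith

lemma closure_inter_narrowSector_subset (R δ : ℝ) :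
    closure ({z : ℂ | R < ‖z‖} ∩ narrowSector δ) ⊆ {z | R ≤ ‖z‖} ∩ closure (narrowSector δ) :=
  (closure_inter_subset_inter_closure _ _).trans
    (inter_subset_inter_left _ (closure_lt_subset_le continuous_const continuous_norm))

lemma one_half_le_cos_mul {θ c δ : ℝ} (hc : 0 ≤ c) (hθ : |θ| ≤ δ) (hcδ : c * δ ≤ π / 3) :
    1 / 2 ≤ Real.cos (θ * c) := by
  rw [← cos_pi_div_three, ← Real.cos_abs (θ * c)]
  refine cos_le_cos_of_nonneg_of_le_pi (abs_nonneg _) (by linarith [pi_pos]) ?_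
  rw [abs_mul, abs_of_nonneg hc]
  nlinarith [abs_nonneg θ]

lemma rpow_le_two_mul_re_cpow {x : ℂ} {c δ : ℝ} (hc : 0 ≤ c) (hx : |arg x| ≤ δ)
    (hcδ : c * δ ≤ π / 3) : ‖x‖ ^ c ≤ 2 * (x ^ (c : ℂ)).re := by
  rw [cpow_ofReal_re]
  nlinarith [one_half_le_cos_mul hc hx hcδ, rpow_nonneg (norm_nonneg x) c]

lemma re_cpow_le_rpow (x : ℂ) (c : ℝ) : (x ^ (c : ℂ)).re ≤ ‖x‖ ^ c :=
  norm_cpow_real x c ▸ re_le_norm _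

lemma differentiableOn_cpow_const (c : ℂ) :
    DifferentiableOn ℂ (fun z : ℂ => z ^ c) slitPlane :=
  fun _ hz => (differentiableAt_id.cpow_const hz).differentiableWithinAt

lemma rpow_le_rpow_add_one {r c d : ℝ} (hr : 0 ≤ r) (hc : 0 ≤ c) (hcd : c ≤ d) :
    r ^ c ≤ r ^ d + 1 := by
  rcases le_total r 1 with h | h
  · linarith [rpow_le_one hr h hc, rpow_nonneg hr d]
  · linarith [rpow_le_rpow_of_exponent_le h hcd]

lemma mul_rpow_add_one_le {r c d M N : ℝ} (hr : 0 ≤ r) (hc : 0 ≤ c) (hcd : c ≤ d) (hM : 0 ≤ M)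
    (hMN : M ≤ N) : M * (r ^ c + 1) ≤ 2 * N * (r ^ d + 1) := by
  have := rpow_le_rpow_add_one hr hc hcd
  nlinarith [rpow_nonneg hr d]

lemma rpow_add_one_le_mul_rpow {R r c : ℝ} (hR : 0 < R) (hr : R ≤ r) (hc : 0 ≤ c) :
    r ^ c + 1 ≤ (1 + (R ^ c)⁻¹) * r ^ c := by
  have hRc : 0 < R ^ c := rpow_pos_of_pos hR c
  have : 1 ≤ r ^ c / R ^ c := (one_le_div hRc).2 (rpow_le_rpow hR.le hr hc)
  rw [add_mul, one_mul, inv_mul_eq_div]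
  linarith

theorem HasSubMeanValueOn.le_re_of_exhaustion {U V : Set ℂ} {K : ℕ → Set ℂ} {u : ℂ → ℝ}
    {g : ℂ → ℂ} (hsm : HasSubMeanValueOn u U) (hu : ContinuousOn u U)
    (hK : ExhaustiveFamily K U) (hV : IsOpen V) (hg : DifferentiableOn ℂ g (U ∩ closure V))
    (hKb : ∀ i, ∀ z ∈ frontier (K i) ∩ closure V, u z ≤ (g z).re)
    (hVb : ∀ z ∈ U ∩ frontier V, u z ≤ (g z).re) : ∀ z ∈ U ∩ V, u z ≤ (g z).re := by
  rintro z ⟨hzU, hzV⟩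
  obtain ⟨i, hi⟩ := mem_iUnion.1 (hK.union_eq ▸ hzU)
  have hcl : closure (K i ∩ V) ⊆ U ∩ closure V := fun w hw =>
    ⟨hK.closure_subset i (closure_mono inter_subset_left hw), closure_mono inter_subset_right hw⟩
  refine (hsm.mono fun w hw => (hcl (subset_closure hw)).1).le_re_of_le_re_on_frontier
    ((hK.isOpen i).inter hV)
    ((hK.compact_closure i).of_isClosed_subset isClosed_closure (closure_mono inter_subset_left))
    (hu.mono fun w hw => (hcl hw).1) (hg.mono hcl) (fun w hw => ?_) z ⟨hi, hzV⟩
  rcases frontier_inter_subset _ _ hw with hw | hw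
  · exact hKb i w hw
  · exact hVb w ⟨hK.closure_subset i hw.1, hw.2⟩

theorem HasSubMeanValueOn.exists_le_rpow_of_exhaustion {U : Set ℂ} {K : ℕ → Set ℂ}
    {u : ℂ → ℝ} {R δ κ A : ℝ} (hsm : HasSubMeanValueOn u U) (hu : ContinuousOn u U)
    (hK : ExhaustiveFamily K U) (hR : 0 < R) (hUR : U ⊆ {z | R < ‖z‖}) (hδ : 0 ≤ δ)
    (hδπ : δ < π) (hκ : 0 ≤ κ) (hκδ : κ * δ ≤ π / 3) (hA : 0 ≤ A)
    (hKb : ∀ i, ∀ z ∈ frontier (K i) ∩ closure (narrowSector δ), u z ≤ A * (‖z‖ ^ κ + 1))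
    (hVb : ∀ z ∈ U ∩ frontier (narrowSector δ), u z ≤ A * (‖z‖ ^ κ + 1)) :
    ∃ C, ∀ z ∈ U ∩ narrowSector δ, u z ≤ C * ‖z‖ ^ κ := by
  set C := 2 * A * (1 + (R ^ κ)⁻¹)
  have hC : 0 ≤ C := by positivity
  have hne : ∀ z ∈ U, z ≠ 0 := fun z hz => norm_pos_iff.1 (hR.trans (hUR hz))
  have hmajor : ∀ z ∈ U ∩ closure (narrowSector δ),
      A * (‖z‖ ^ κ + 1) ≤ ((C : ℂ) * z ^ (κ : ℂ)).re := by
    rintro z ⟨hzU, hzS⟩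
    have harg := abs_arg_le_of_mem_closure_narrowSector hδ hδπ.le (hne z hzU) hzS
    rw [re_ofReal_mul]
    calc A * (‖z‖ ^ κ + 1) ≤ A * ((1 + (R ^ κ)⁻¹) * ‖z‖ ^ κ) :=
          mul_le_mul_of_nonneg_left (rpow_add_one_le_mul_rpow hR (hUR hzU).le hκ) hA
      _ = A * (1 + (R ^ κ)⁻¹) * ‖z‖ ^ κ := by ring
      _ ≤ A * (1 + (R ^ κ)⁻¹) * (2 * (z ^ (κ : ℂ)).re) :=
          mul_le_mul_of_nonneg_left (rpow_le_two_mul_re_cpow hκ harg hκδ) (by positivity)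
      _ = C * (z ^ (κ : ℂ)).re := by ring
  have hg : DifferentiableOn ℂ (fun z => (C : ℂ) * z ^ (κ : ℂ)) (U ∩ closure (narrowSector δ)) :=
    ((differentiableOn_cpow_const _).const_mul _).mono fun z hz =>
      mem_slitPlane_of_mem_closure_narrowSector hδ hδπ (hne z hz.1) hz.2
  refine ⟨C, fun z hz => ?_⟩
  have hle := hsm.le_re_of_exhaustion hu hK (isOpen_narrowSector δ) hg
    (fun i z hz => (hKb i z hz).trans (hmajor z ⟨hK.closure_subset i hz.1.1, hz.2⟩))
    (fun z hz => (hVb z hz).trans (hmajor z ⟨hz.1, frontier_subset_closure hz.2⟩)) z hz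
  rw [re_ofReal_mul] at hle
  exact hle.trans (mul_le_mul_of_nonneg_left (re_cpow_le_rpow z κ) hC)

theorem HasSubMeanValueOn.le_re_on_truncated_narrowSector {u : ℂ → ℝ} {g : ℂ → ℂ}
    {R ρ δ : ℝ} (hR : 0 < R) (hδ : 0 ≤ δ) (hδπ : δ < π)
    (hsm : HasSubMeanValueOn u ({z | R < ‖z‖} ∩ narrowSector δ))
    (hu : ContinuousOn u (closure ({z | R < ‖z‖} ∩ narrowSector δ)))
    (hg : DifferentiableOn ℂ g slitPlane)
    (h_inner : ∀ z ∈ closure ({z | R < ‖z‖} ∩ narrowSector δ), ‖z‖ ≤ R → u z ≤ (g z).re)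
    (h_edge : ∀ z ∈ frontier (narrowSector δ), R < ‖z‖ → u z ≤ (g z).re)
    (h_outer : ∀ z ∈ narrowSector δ, ‖z‖ = ρ → u z ≤ (g z).re) :
    ∀ z ∈ narrowSector δ, R < ‖z‖ → ‖z‖ < ρ → u z ≤ (g z).re := by
  set W := {z : ℂ | R < ‖z‖} ∩ narrowSector δ
  have hΩ : IsOpen (W ∩ ball 0 ρ) :=
    ((isOpen_lt continuous_const continuous_norm).inter (isOpen_narrowSector δ)).inter isOpen_ball
  have hcl : closure (W ∩ ball 0 ρ) ⊆ closure W ∩ closedBall 0 ρ :=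
    (closure_inter_subset_inter_closure _ _).trans
      (inter_subset_inter_right _ closure_ball_subset_closedBall)
  have hslit : closure (W ∩ ball 0 ρ) ⊆ slitPlane := fun z hz =>
    have hzW := closure_inter_narrowSector_subset R δ (hcl hz).1
    mem_slitPlane_of_mem_closure_narrowSector hδ hδπ (norm_pos_iff.1 (hR.trans_le hzW.1)) hzW.2
  intro z hzS hzR hzρ
  refine (hsm.mono inter_subset_left).le_re_of_le_re_on_frontier hΩ
    ((isCompact_closedBall 0 ρ).of_isClosed_subset isClosed_closure
      (hcl.trans inter_subset_right))
    (hu.mono fun w hw => (hcl hw).1) (hg.mono hslit) (fun w hw => ?_)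
    z ⟨⟨hzR, hzS⟩, mem_ball_zero_iff.2 hzρ⟩
  rw [hΩ.frontier_eq] at hw
  obtain ⟨⟨hwW, hwρ⟩, hwΩ⟩ := And.imp_left (@hcl w) hw
  rcases le_or_gt ‖w‖ R with hwR | hwR
  · exact h_inner w hwW hwR
  by_cases hwS : w ∈ narrowSector δ
  · refine h_outer w hwS ((mem_closedBall_zero_iff.1 hwρ).antisymm (not_lt.1 fun hlt => ?_))
    exact hwΩ ⟨⟨hwR, hwS⟩, mem_ball_zero_iff.2 hlt⟩
  · rw [(isOpen_narrowSector δ).frontier_eq] at h_edge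
    exact h_edge w ⟨(closure_inter_narrowSector_subset R δ hwW).2, hwS⟩ hwR

theorem HasSubMeanValueOn.le_add_rpow_add_mul_rpow {u : ℂ → ℝ} {R δ b κ A B C ε : ℝ}
    (hR : 0 < R) (hδ : 0 ≤ δ) (hb : 0 ≤ b) (hκ : 0 ≤ κ) (hbδ : b * δ ≤ π / 3)
    (hκδ : (κ + 1) * δ ≤ π / 3) (hA : 0 ≤ A) (hB : 0 ≤ B) (hε : 0 < ε)
    (hsm : HasSubMeanValueOn u ({z | R < ‖z‖} ∩ narrowSector δ))
    (hu : ContinuousOn u (closure ({z | R < ‖z‖} ∩ narrowSector δ)))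
    (h_inner : ∀ z ∈ closure ({z | R < ‖z‖} ∩ narrowSector δ), ‖z‖ ≤ R → u z ≤ B)
    (h_edge : ∀ z ∈ frontier (narrowSector δ), R < ‖z‖ → u z ≤ A * ‖z‖ ^ b)
    (h_growth : ∀ z ∈ narrowSector δ, R < ‖z‖ → u z ≤ C * ‖z‖ ^ κ) :
    ∀ z ∈ narrowSector δ, R < ‖z‖ → u z ≤ B + 2 * A * ‖z‖ ^ b + ε * ‖z‖ ^ (κ + 1) := by
  have hδπ : δ < π := by nlinarith [pi_pos]
  -- the Phragmén–Lindelöf majorant: the `ε`-term beats the a priori growth of order `κ`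
  set g : ℂ → ℂ := fun z => B + (2 * A : ℝ) * z ^ (b : ℂ) + (ε : ℂ) * z ^ ((κ + 1 : ℝ) : ℂ)
  have hg : DifferentiableOn ℂ g slitPlane :=
    ((differentiableOn_const _).add ((differentiableOn_cpow_const _).const_mul _)).add
      ((differentiableOn_cpow_const _).const_mul _)
  have hre : ∀ z, (g z).re = B + 2 * A * (z ^ (b : ℂ)).re + ε * (z ^ ((κ + 1 : ℝ) : ℂ)).re :=
    fun z => by simp only [g, add_re, re_ofReal_mul, ofReal_re]
  have hlower : ∀ z ∈ closure (narrowSector δ), R ≤ ‖z‖ →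
      B + A * ‖z‖ ^ b + ε / 2 * ‖z‖ ^ (κ + 1) ≤ (g z).re := by
    intro z hz hzR
    have harg := abs_arg_le_of_mem_closure_narrowSector hδ hδπ.le
      (norm_pos_iff.1 (hR.trans_le hzR)) hz
    rw [hre]
    nlinarith [rpow_le_two_mul_re_cpow hb harg hbδ,
      rpow_le_two_mul_re_cpow (by linarith) harg hκδ,
      rpow_nonneg (norm_nonneg z) b, rpow_nonneg (norm_nonneg z) (κ + 1)]
  intro z hzS hzR
  set ρ := max (‖z‖ + 1) (2 * C / ε)
  have hρ : 0 < ρ := (by positivity : (0 : ℝ) < ‖z‖ + 1).trans_le (le_max_left _ _)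
  have hle := hsm.le_re_on_truncated_narrowSector (ρ := ρ) hR hδ hδπ hu hg
    (fun w hw hwR => by
      have hwW := closure_inter_narrowSector_subset R δ hw
      nlinarith [h_inner w hw hwR, hlower w hwW.2 hwW.1, rpow_nonneg (norm_nonneg w) b,
        rpow_nonneg (norm_nonneg w) (κ + 1)])
    (fun w hw hwR => by
      nlinarith [h_edge w hw hwR, hlower w (frontier_subset_closure hw) hwR.le,
        rpow_nonneg (norm_nonneg w) (κ + 1)])
    (fun w hw hwρ => by
      have hwR : R < ‖w‖ := hwρ ▸ hzR.trans (by linarith [le_max_left (‖z‖ + 1) (2 * C / ε)])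
      have hCρ : C ≤ ε * ρ / 2 := by
        have := (div_le_iff₀ hε).1 (le_max_right (‖z‖ + 1) (2 * C / ε)); linarith
      have hout : C * ‖w‖ ^ κ ≤ ε / 2 * ‖w‖ ^ (κ + 1) := by
        rw [hwρ, rpow_add_one hρ.ne' κ]; nlinarith [rpow_nonneg hρ.le κ]
      nlinarith [h_growth w hw hwR, hlower w (subset_closure hw) hwR.le,
        rpow_nonneg (norm_nonneg w) b])
    z hzS hzR (by linarith [le_max_left (‖z‖ + 1) (2 * C / ε)])
  rw [hre] at hle
  nlinarith [re_cpow_le_rpow z b, re_cpow_le_rpow z (κ + 1)]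

theorem HasSubMeanValueOn.exists_le_rpow_of_narrowSector {u : ℂ → ℝ} {R δ b κ A C : ℝ}
    (hR : 0 < R) (hδ : 0 ≤ δ) (hb : 0 ≤ b) (hκ : 0 ≤ κ) (hbδ : b * δ ≤ π / 3)
    (hκδ : (κ + 1) * δ ≤ π / 3) (hA : 0 ≤ A)
    (hsm : HasSubMeanValueOn u ({z | R < ‖z‖} ∩ narrowSector δ))
    (hu : ContinuousOn u (closure ({z | R < ‖z‖} ∩ narrowSector δ)))
    (h_edge : ∀ z ∈ frontier (narrowSector δ), R < ‖z‖ → u z ≤ A * (‖z‖ ^ b + 1))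
    (h_growth : ∀ z ∈ narrowSector δ, R < ‖z‖ → u z ≤ C * ‖z‖ ^ κ) :
    ∃ B, 0 < B ∧ ∀ z ∈ narrowSector δ, R < ‖z‖ → u z ≤ B * (‖z‖ ^ b + 1) := by
  obtain ⟨B₀, hB₀⟩ := ((isCompact_closedBall 0 R).inter_left isClosed_closure).bddAbove_image
    (hu.mono inter_subset_left)
  set B := max B₀ 0
  set A' := A * (1 + (R ^ b)⁻¹)
  have h_edge' : ∀ z ∈ frontier (narrowSector δ), R < ‖z‖ → u z ≤ A' * ‖z‖ ^ b :=
    fun z hz hzR => (h_edge z hz hzR).trans <| by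
      rw [mul_assoc]; exact mul_le_mul_of_nonneg_left (rpow_add_one_le_mul_rpow hR hzR.le hb) hA
  have hε : ∀ ε > 0, ∀ z ∈ narrowSector δ, R < ‖z‖ →
      u z ≤ B + 2 * A' * ‖z‖ ^ b + ε * ‖z‖ ^ (κ + 1) := fun ε hε =>
    hsm.le_add_rpow_add_mul_rpow hR hδ hb hκ hbδ hκδ (by positivity) (le_max_right _ _) hε hu
      (fun z hz hzR => (hB₀ ⟨z, ⟨hz, mem_closedBall_zero_iff.2 hzR⟩, rfl⟩).trans
        (le_max_left _ _)) h_edge' h_growth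
  refine ⟨B + 2 * A' + 1, by positivity, fun z hzS hzR => ?_⟩
  have hlim : Tendsto (fun ε => B + 2 * A' * ‖z‖ ^ b + ε * ‖z‖ ^ (κ + 1)) (𝓝[>] 0)
      (𝓝 (B + 2 * A' * ‖z‖ ^ b)) := by
    refine (Continuous.tendsto' ?_ 0 _ (by simp)).mono_left nhdsWithin_le_nhds
    fun_prop
  have hle : u z ≤ B + 2 * A' * ‖z‖ ^ b :=
    ge_of_tendsto hlim (eventually_nhdsWithin_of_forall fun ε hε' => hε ε hε' z hzS hzR)
  have hB : 0 ≤ B := le_max_right _ _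
  have hA' : 0 ≤ A' := by positivity
  nlinarith [mul_nonneg hB (rpow_nonneg (norm_nonneg z) b), rpow_nonneg (norm_nonneg z) b]

lemma exists_pos_mul_le_pi_div_three_of_lt {κ θ : ℝ} (hκ : 0 ≤ κ) (hθ : 0 < θ) :
    ∃ δ, 0 < δ ∧ (κ + 1) * δ ≤ π / 3 ∧ δ < θ := by
  refine ⟨min (π / (3 * (κ + 1))) (θ / 2), lt_min (by positivity) (by positivity), ?_,
    (min_le_right _ _).trans_lt (half_lt_self hθ)⟩
  calc (κ + 1) * min (π / (3 * (κ + 1))) (θ / 2) ≤ (κ + 1) * (π / (3 * (κ + 1))) :=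
        mul_le_mul_of_nonneg_left (min_le_left _ _) (by positivity)
    _ = π / 3 := by field_simp

lemma mem_Da_of_mem_closure_narrowSector {a R δ : ℝ} {z : ℂ} (hR : 0 ≤ R) (hδ : 0 ≤ δ)
    (hδπ : δ ≤ π) (hδa : δ < π / (2 * a)) (hz : z ∈ closure (narrowSector δ)) (hzR : R < ‖z‖) :
    z ∈ Da a R :=
  ⟨hzR, (abs_arg_le_of_mem_closure_narrowSector hδ hδπ (norm_pos_iff.1 (hR.trans_lt hzR))
    hz).trans_lt hδa⟩

lemma exists_rpow_bound_of_lt_abs_arg {U : Set ℂ} {u : ℂ → ℝ} {bp bm δ : ℝ} (hbp : 0 ≤ bp)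
    (hbm : 0 ≤ bm) (hminus : ∃ M, 0 < M ∧ ∀ z ∈ U, arg z < -δ → u z ≤ M * (‖z‖ ^ bm + 1))
    (hplus : ∃ M, 0 < M ∧ ∀ z ∈ U, δ < arg z → u z ≤ M * (‖z‖ ^ bp + 1)) :
    ∃ M, 0 < M ∧ ∀ z ∈ U, δ < |arg z| → u z ≤ M * (‖z‖ ^ max bp bm + 1) := by
  obtain ⟨Mm, hMm, hm⟩ := hminus
  obtain ⟨Mp, hMp, hp⟩ := hplus
  refine ⟨2 * max Mp Mm, by positivity, fun z hz harg => ?_⟩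
  rcases lt_abs.1 harg with h | h
  · exact (hp z hz h).trans
      (mul_rpow_add_one_le (norm_nonneg z) hbp (le_max_left _ _) hMp.le (le_max_left _ _))
  · exact (hm z hz (by linarith)).trans
      (mul_rpow_add_one_le (norm_nonneg z) hbm (le_max_right _ _) hMm.le (le_max_right _ _))

/-- a Phragmén–Lindelöf type growth estimate on a sector with
different growth rates near the two boundary rays. -/
theorem subharmonic_growth_on_sector
    (a R bp bm κ : ℝ) (ha : 1 / 2 < a) (hR : 0 < R)
    (hbp : 0 ≤ bp) (hbm : 0 ≤ bm) (hκ : max bp bm ≤ κ)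
    (f : ℂ → ℝ)
    (hfc : ContinuousOn f (closure (Da a R)))
    (hfs : IsSubharmonicOn f (Da a R))
    (hminus : ∀ δ : ℝ, 0 < δ → ∃ M : ℝ, 0 < M ∧ ∀ z ∈ Da a R,
      Complex.arg z < -δ → f z ≤ M * (‖z‖ ^ bm + 1))
    (hplus : ∀ δ : ℝ, 0 < δ → ∃ M : ℝ, 0 < M ∧ ∀ z ∈ Da a R,
      δ < Complex.arg z → f z ≤ M * (‖z‖ ^ bp + 1))
    (K : ℕ → Set ℂ) (hK : ExhaustiveFamily K (Da a R)) (C : ℝ) (hC : 0 < C)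
    (hKbd : ∀ i, ∀ z ∈ frontier (K i), f z ≤ C * (‖z‖ ^ κ + 1)) :
    ∃ C₁ : ℝ, 0 < C₁ ∧ ∀ z ∈ Da a R, f z ≤ C₁ * (‖z‖ ^ max bp bm + 1) := by
  set b := max bp bm
  have hb : 0 ≤ b := le_max_of_le_left hbp
  have hκ₀ : 0 ≤ κ := hb.trans hκ
  obtain ⟨δ, hδ, hκδ, hδa⟩ :=
    exists_pos_mul_le_pi_div_three_of_lt hκ₀ (div_pos pi_pos (by linarith) : 0 < π / (2 * a))
  have hδπ : δ < π := by nlinarith [pi_pos]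
  have hne : ∀ {z : ℂ}, R < ‖z‖ → z ≠ 0 := fun hz => norm_pos_iff.1 (hR.trans hz)
  have hsub : ∀ z ∈ closure (narrowSector δ), R < ‖z‖ → z ∈ Da a R :=
    fun _ => mem_Da_of_mem_closure_narrowSector hR.le hδ.le hδπ.le hδa
  obtain ⟨M, hM, hray⟩ :=
    exists_rpow_bound_of_lt_abs_arg hbp hbm (hminus _ (half_pos hδ)) (hplus _ (half_pos hδ))
  have h_edge : ∀ z ∈ frontier (narrowSector δ), R < ‖z‖ → f z ≤ M * (‖z‖ ^ b + 1) :=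
    fun z hz hzR => hray z (hsub z (frontier_subset_closure hz) hzR) <| by
      rw [abs_arg_eq_of_mem_frontier_narrowSector hδ.le hδπ.le (hne hzR) hz]; linarith
  obtain ⟨C₄, hC₄⟩ := hfs.hasSubMeanValueOn.exists_le_rpow_of_exhaustion hfs.1 hK hR
    (fun z hz => hz.1) hδ.le hδπ hκ₀ (by nlinarith) (by positivity : 0 ≤ 2 * max C M)
    (fun i z hz => (hKbd i z hz.1).trans
      (mul_rpow_add_one_le (norm_nonneg z) hκ₀ le_rfl hC.le (le_max_left _ _)))
    (fun z hz => (h_edge z hz.2 hz.1.1).trans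
      (mul_rpow_add_one_le (norm_nonneg z) hb hκ hM.le (le_max_right _ _)))
  have hW : {z : ℂ | R < ‖z‖} ∩ narrowSector δ ⊆ Da a R :=
    fun z hz => hsub z (subset_closure hz.2) hz.1
  obtain ⟨B, hB, hbound⟩ := (hfs.hasSubMeanValueOn.mono hW).exists_le_rpow_of_narrowSector hR
    hδ.le hb hκ₀ (by nlinarith) hκδ hM.le (hfc.mono (closure_mono hW)) h_edge
    (fun z hz hzR => hC₄ z ⟨hW ⟨hzR, hz⟩, hz⟩)
  refine ⟨max B M, lt_max_of_lt_left hB, fun z hz => ?_⟩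
  by_cases hzS : z ∈ narrowSector δ
  · exact (hbound z hzS hz.1).trans (mul_le_mul_of_nonneg_right (le_max_left _ _) (by positivity))
  · rw [mem_narrowSector_iff hδ.le hδπ.le (hne hz.1)] at hzS
    exact (hray z hz (by linarith)).trans
      (mul_le_mul_of_nonneg_right (le_max_right _ _) (by positivity))
end
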